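/- Under the hypotheses of the vectorial fundamental transformation, the transformed point function x̂ := x − Ω(X,ξ*) Ω(ξ,ξ*)^{-1} Ω(ξ,H) satisfies ∂x̂/∂u_i = X̂_i Ĥ_i for every i, where X̂_i := X_i − Ω(X,ξ*)Ω(ξ,ξ*)^{-1}ξ_i and Ĥ_i := H_i − ξ*_i Ω(ξ,ξ*)^{-1}Ω(ξ,H). -/

import Mathlib

open scoped BigOperators

/-- Partial derivative of a scalar function on `ℝ^N` in the `i`-th coordinate direction. -/
noncomputable def pd {N : ℕ} (i : Fin N) (f : (Fin N → ℝ) → ℝ) (u : Fin N → ℝ) : ℝ :=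
  fderiv ℝ f u (Pi.single i 1)

section helpers
variable {N : ℕ}

lemma pd_const (i : Fin N) (u : Fin N → ℝ) (c : ℝ) : pd i (fun _ => c) u = 0 := by
  simp [pd]

lemma pd_sub (i : Fin N) (u : Fin N → ℝ) {f g : (Fin N → ℝ) → ℝ}
    (hf : DifferentiableAt ℝ f u) (hg : DifferentiableAt ℝ g u) :
    pd i (fun v => f v - g v) u = pd i f u - pd i g u := by
  simp [pd, fderiv_fun_sub hf hg]

lemma pd_mul (i : Fin N) (u : Fin N → ℝ) {f g : (Fin N → ℝ) → ℝ}
    (hf : DifferentiableAt ℝ f u) (hg : DifferentiableAt ℝ g u) :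
    pd i (fun v => f v * g v) u = pd i f u * g u + f u * pd i g u := by
  simp [pd, fderiv_fun_mul hf hg]; ring

lemma pd_sum (i : Fin N) (u : Fin N → ℝ) {ι : Type*} (s : Finset ι)
    {f : ι → (Fin N → ℝ) → ℝ} (hf : ∀ b ∈ s, DifferentiableAt ℝ (f b) u) :
    pd i (fun v => ∑ b ∈ s, f b v) u = ∑ b ∈ s, pd i (f b) u := by
  simp [pd, fderiv_fun_sum hf]

end helpers

theorem transformed_points
    {N M D : ℕ}
    (β : Fin N → Fin N → (Fin N → ℝ) → ℝ)
    (x : (Fin N → ℝ) → Fin D → ℝ)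
    (X : Fin N → (Fin N → ℝ) → Fin D → ℝ)
    (H : Fin N → (Fin N → ℝ) → ℝ)
    (ξ : Fin N → (Fin N → ℝ) → Fin M → ℝ)
    (ξs : Fin N → (Fin N → ℝ) → Fin M → ℝ)
    (Ω Ωinv : (Fin N → ℝ) → Fin M → Fin M → ℝ)
    (ΩX : (Fin N → ℝ) → Fin D → Fin M → ℝ)
    (ΩξH : (Fin N → ℝ) → Fin M → ℝ)
    (xh : (Fin N → ℝ) → Fin D → ℝ)
    (Xh : Fin N → (Fin N → ℝ) → Fin D → ℝ)
    (Hh : Fin N → (Fin N → ℝ) → ℝ)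
    (hβ : ∀ i j, i ≠ j → ContDiff ℝ (⊤ : ℕ∞) (β i j))
    (hx : ∀ a, ContDiff ℝ (⊤ : ℕ∞) (fun u => x u a))
    (hX : ∀ i a, ContDiff ℝ (⊤ : ℕ∞) (fun u => X i u a))
    (hH : ∀ i, ContDiff ℝ (⊤ : ℕ∞) (H i))
    (hξ : ∀ i a, ContDiff ℝ (⊤ : ℕ∞) (fun u => ξ i u a))
    (hξssm : ∀ i a, ContDiff ℝ (⊤ : ℕ∞) (fun u => ξs i u a))
    (hΩsm : ∀ a b, ContDiff ℝ (⊤ : ℕ∞) (fun u => Ω u a b))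
    (hΩinvsm : ∀ a b, ContDiff ℝ (⊤ : ℕ∞) (fun u => Ωinv u a b))
    (hΩXsm : ∀ a b, ContDiff ℝ (⊤ : ℕ∞) (fun u => ΩX u a b))
    (hΩξHsm : ∀ a, ContDiff ℝ (⊤ : ℕ∞) (fun u => ΩξH u a))
    (hDarboux : ∀ i j k, i ≠ j → j ≠ k → i ≠ k → ∀ u : Fin N → ℝ,
      pd k (β i j) u = β i k u * β k j u)
    (hpoints : ∀ i (u : Fin N → ℝ) (a : Fin D),
      pd i (fun v => x v a) u = X i u a * H i u)
    (hXsys : ∀ i j, i ≠ j → ∀ (u : Fin N → ℝ) (a : Fin D),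
      pd i (fun v => X j v a) u = β j i u * X i u a)
    (hHsys : ∀ i j, i ≠ j → ∀ u : Fin N → ℝ,
      pd i (H j) u = β i j u * H i u)
    (hdirect : ∀ i j, i ≠ j → ∀ (u : Fin N → ℝ) (a : Fin M),
      pd i (fun v => ξ j v a) u = β j i u * ξ i u a)
    (hadjoint : ∀ i j, i ≠ j → ∀ (u : Fin N → ℝ) (a : Fin M),
      pd i (fun v => ξs j v a) u = β i j u * ξs i u a)
    (hΩ : ∀ i (u : Fin N → ℝ) (a b : Fin M),
      pd i (fun v => Ω v a b) u = ξ i u a * ξs i u b)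
    (hΩX : ∀ i (u : Fin N → ℝ) (a : Fin D) (b : Fin M),
      pd i (fun v => ΩX v a b) u = X i u a * ξs i u b)
    (hΩξH : ∀ i (u : Fin N → ℝ) (a : Fin M),
      pd i (fun v => ΩξH v a) u = ξ i u a * H i u)
    (hinv₁ : ∀ (u : Fin N → ℝ) (a b : Fin M),
      ∑ c, Ω u a c * Ωinv u c b = if a = b then 1 else 0)
    (hinv₂ : ∀ (u : Fin N → ℝ) (a b : Fin M),
      ∑ c, Ωinv u a c * Ω u c b = if a = b then 1 else 0)
    (hxh : ∀ (u : Fin N → ℝ) (a : Fin D),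
      xh u a = x u a - ∑ b, ∑ c, ΩX u a b * Ωinv u b c * ΩξH u c)
    (hXh : ∀ i (u : Fin N → ℝ) (a : Fin D),
      Xh i u a = X i u a - ∑ b, ∑ c, ΩX u a b * Ωinv u b c * ξ i u c)
    (hHh : ∀ i (u : Fin N → ℝ),
      Hh i u = H i u - ∑ a, ∑ b, ξs i u a * Ωinv u a b * ΩξH u b) :
    ∀ i (u : Fin N → ℝ) (a : Fin D),
      pd i (fun v => xh v a) u = Xh i u a * Hh i u := by
  intro i u a
  -- differentiability facts
  have dΩinv : ∀ b c, DifferentiableAt ℝ (fun v => Ωinv v b c) u :=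
    fun b c => (hΩinvsm b c).differentiable (by simp) u
  have dΩ : ∀ b c, DifferentiableAt ℝ (fun v => Ω v b c) u :=
    fun b c => (hΩsm b c).differentiable (by simp) u
  have dΩX : ∀ b c, DifferentiableAt ℝ (fun v => ΩX v b c) u :=
    fun b c => (hΩXsm b c).differentiable (by simp) u
  have dΩξH : ∀ b, DifferentiableAt ℝ (fun v => ΩξH v b) u :=
    fun b => (hΩξHsm b).differentiable (by simp) u
  have dx : DifferentiableAt ℝ (fun v => x v a) u := (hx a).differentiable (by simp) u
  -- derivative of the inverse potential
  have pdΩinv : ∀ b c, pd i (fun v => Ωinv v b c) u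
      = -((∑ p, Ωinv u b p * ξ i u p) * (∑ q, ξs i u q * Ωinv u q c)) := by
    intro b c
    have hzero : ∀ d, (∑ p, pd i (fun v => Ωinv v b p) u * Ω u p d)
        = -((∑ p, Ωinv u b p * ξ i u p) * ξs i u d) := by
      intro d
      have hconst : pd i (fun v => ∑ p, Ωinv v b p * Ω v p d) u = 0 := by
        have he : (fun v => ∑ p, Ωinv v b p * Ω v p d)
            = fun _ => if b = d then (1:ℝ) else 0 := funext fun v => hinv₂ v b d
        rw [he]; exact pd_const i u _
      rw [pd_sum i u Finset.univ (fun p _ => ((dΩinv b p).fun_mul (dΩ p d)))] at hconst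
      have h3 : ∀ p : Fin M, pd i (fun v => Ωinv v b p * Ω v p d) u
          = pd i (fun v => Ωinv v b p) u * Ω u p d + Ωinv u b p * (ξ i u p * ξs i u d) := by
        intro p
        rw [pd_mul i u (dΩinv b p) (dΩ p d), hΩ i u p d]
      rw [Finset.sum_congr rfl (fun p _ => h3 p), Finset.sum_add_distrib] at hconst
      have : ∑ p, Ωinv u b p * (ξ i u p * ξs i u d)
          = (∑ p, Ωinv u b p * ξ i u p) * ξs i u d := by
        rw [Finset.sum_mul]; exact Finset.sum_congr rfl fun p _ => by ring
      linarith [hconst, this]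
    calc pd i (fun v => Ωinv v b c) u
        = ∑ p, pd i (fun v => Ωinv v b p) u * (if p = c then 1 else 0) := by
          simp
      _ = ∑ p, pd i (fun v => Ωinv v b p) u * (∑ d, Ω u p d * Ωinv u d c) := by
          exact Finset.sum_congr rfl fun p _ => by rw [hinv₁ u p c]
      _ = ∑ d, (∑ p, pd i (fun v => Ωinv v b p) u * Ω u p d) * Ωinv u d c := by
          simp_rw [Finset.mul_sum, Finset.sum_mul]
          rw [Finset.sum_comm]
          exact Finset.sum_congr rfl fun d _ => Finset.sum_congr rfl fun p _ => by ring
      _ = ∑ d, -((∑ p, Ωinv u b p * ξ i u p) * ξs i u d) * Ωinv u d c := by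
          exact Finset.sum_congr rfl fun d _ => by rw [hzero d]
      _ = -((∑ p, Ωinv u b p * ξ i u p) * (∑ q, ξs i u q * Ωinv u q c)) := by
          simp_rw [Finset.mul_sum, ← Finset.sum_neg_distrib]
          exact Finset.sum_congr rfl fun d _ => by ring
  -- abbreviations
  set S1 : ℝ := ∑ b, ∑ c, ΩX u a b * Ωinv u b c * ξ i u c with hS1
  set S2 : ℝ := ∑ p, ∑ q, ξs i u p * Ωinv u p q * ΩξH u q with hS2
  -- rewrite xh
  have hxh' : (fun v => xh v a)
      = fun v => x v a - ∑ b, ∑ c, ΩX v a b * Ωinv v b c * ΩξH v c :=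
    funext fun v => hxh v a
  rw [hxh']
  have dsum : ∀ (b : Fin M), DifferentiableAt ℝ (fun v => ∑ c, ΩX v a b * Ωinv v b c * ΩξH v c) u :=
    fun b => DifferentiableAt.fun_sum fun c _ => (((dΩX a b).mul (dΩinv b c)).mul (dΩξH c))
  rw [pd_sub i u dx (DifferentiableAt.fun_sum fun b _ => dsum b),
      pd_sum i u Finset.univ (fun b _ => dsum b), hpoints i u a]
  have hterm : ∀ b : Fin M, pd i (fun v => ∑ c, ΩX v a b * Ωinv v b c * ΩξH v c) u
      = ∑ c, (X i u a * ξs i u b * Ωinv u b c * ΩξH u c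
          + ΩX u a b * (-((∑ p, Ωinv u b p * ξ i u p) * (∑ q, ξs i u q * Ωinv u q c))) * ΩξH u c
          + ΩX u a b * Ωinv u b c * (ξ i u c * H i u)) := by
    intro b
    rw [pd_sum i u Finset.univ (fun c _ => (((dΩX a b).fun_mul (dΩinv b c)).fun_mul (dΩξH c)))]
    refine Finset.sum_congr rfl fun c _ => ?_
    rw [pd_mul i u ((dΩX a b).fun_mul (dΩinv b c)) (dΩξH c),
        pd_mul i u (dΩX a b) (dΩinv b c), hΩX i u a b, pdΩinv b c, hΩξH i u c]
    ring
  rw [Finset.sum_congr rfl (fun b _ => hterm b)]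
  -- now pure algebra with sums
  have e1 : ∑ b : Fin M, ∑ c, X i u a * ξs i u b * Ωinv u b c * ΩξH u c = X i u a * S2 := by
    rw [hS2, Finset.mul_sum]
    refine Finset.sum_congr rfl fun b _ => ?_
    rw [Finset.mul_sum]
    exact Finset.sum_congr rfl fun c _ => by ring
  have e2 : ∑ b : Fin M, ∑ c, ΩX u a b * Ωinv u b c * (ξ i u c * H i u) = S1 * H i u := by
    rw [hS1, Finset.sum_mul]
    refine Finset.sum_congr rfl fun b _ => ?_
    rw [Finset.sum_mul]
    exact Finset.sum_congr rfl fun c _ => by ring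
  have e3 : ∑ b : Fin M, ∑ c,
      ΩX u a b * (-((∑ p, Ωinv u b p * ξ i u p) * (∑ q, ξs i u q * Ωinv u q c))) * ΩξH u c
      = -(S1 * S2) := by
    have hA : ∑ b : Fin M, ΩX u a b * (∑ p, Ωinv u b p * ξ i u p) = S1 := by
      rw [hS1]
      refine Finset.sum_congr rfl fun b _ => ?_
      rw [Finset.mul_sum]
      exact Finset.sum_congr rfl fun p _ => by ring
    have hB : ∑ c : Fin M, (∑ q, ξs i u q * Ωinv u q c) * ΩξH u c = S2 := by
      rw [hS2, Finset.sum_comm]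
      exact Finset.sum_congr rfl fun c _ => by rw [Finset.sum_mul]
    calc ∑ b : Fin M, ∑ c,
        ΩX u a b * (-((∑ p, Ωinv u b p * ξ i u p) * (∑ q, ξs i u q * Ωinv u q c))) * ΩξH u c
        = -((∑ b : Fin M, ΩX u a b * (∑ p, Ωinv u b p * ξ i u p))
            * (∑ c : Fin M, (∑ q, ξs i u q * Ωinv u q c) * ΩξH u c)) := by
          rw [Finset.sum_mul_sum, ← Finset.sum_neg_distrib]
          refine Finset.sum_congr rfl fun b _ => ?_
          rw [← Finset.sum_neg_distrib]
          exact Finset.sum_congr rfl fun c _ => by ring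
      _ = -(S1 * S2) := by rw [hA, hB]
  have esplit : ∑ b : Fin M, ∑ c, (X i u a * ξs i u b * Ωinv u b c * ΩξH u c
      + ΩX u a b * (-((∑ p, Ωinv u b p * ξ i u p) * (∑ q, ξs i u q * Ωinv u q c))) * ΩξH u c
      + ΩX u a b * Ωinv u b c * (ξ i u c * H i u))
      = X i u a * S2 + -(S1 * S2) + S1 * H i u := by
    rw [← e1, ← e2, ← e3, ← Finset.sum_add_distrib, ← Finset.sum_add_distrib]
    refine Finset.sum_congr rfl fun b _ => ?_
    rw [← Finset.sum_add_distrib, ← Finset.sum_add_distrib]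
  rw [esplit, hXh i u a, hHh i u]
  rw [← hS1, ← hS2]
  ring
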